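/- arXiv:2307.11452 — 7 statements merged into one kernel-verified Lean document; each statement's English description precedes it below -/
import Mathlib

section
/- In any multi-agent modular model, for every agent i, every ground justification term t, and every propositional formula F, the formula [[t]]_i F → F is valid (factivity of ground justifications). -/
open Classical

/-- Propositional formulas. -/
inductive PropForm : Type
  | atom : ℕ → PropForm
  | fls : PropForm
  | imp : PropForm → PropForm → PropForm
  deriving DecidableEq

/-- Justification terms: constants, variables (indexed by a formula and a list
of formulas), and application. -/
inductive Tm : Type
  | const : ℕ → Tm
  | var : PropForm → List PropForm → Tm
  | app : Tm → Tm → Tm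
  deriving DecidableEq

/-- Ground terms: terms without variables. -/
def Tm.Ground : Tm → Prop
  | .const _ => True
  | .var _ _ => False
  | .app s t => s.Ground ∧ t.Ground

/-- Subterm relation. -/
def Tm.Subterm (s : Tm) : Tm → Prop
  | .app a b => s = Tm.app a b ∨ s.Subterm a ∨ s.Subterm b
  | t => s = t

/-- Substitution of a term for a justification variable. -/
def Tm.subst (x : PropForm × List PropForm) (r : Tm) : Tm → Tm
  | .const n => .const n
  | .var F L => if (F, L) = x then r else .var F L
  | .app a b => .app (Tm.subst x r a) (Tm.subst x r b)

/-- `bigImp [A1,…,An] B = A1 → (… → (An → B)…)`. -/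
def bigImp (L : List PropForm) (B : PropForm) : PropForm := L.foldr PropForm.imp B

/-- Formulas of the full language 𝓛J. -/
inductive JForm : Type
  | atom : ℕ → JForm
  | fls : JForm
  | imp : JForm → JForm → JForm
  | box : Fin 2 → JForm → JForm
  | just : Fin 2 → Tm → PropForm → JForm

/-- Embedding of propositional formulas into 𝓛J. -/
def PropForm.toJ : PropForm → JForm
  | .atom n => .atom n
  | .fls => .fls
  | .imp A B => .imp A.toJ B.toJ

/-- A multi-agent frame: agents 0 (explainer, "agent 1") and 1 (explainee,
"agent 2"), worlds, reflexive transitive accessibility relations, evidence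
functions, and a valuation. -/
structure Frame where
  W : Type
  ne : Nonempty W
  R : Fin 2 → W → W → Prop
  refl : ∀ i, Reflexive (R i)
  trans : ∀ i, Transitive (R i)
  star : Fin 2 → Tm → W → Set PropForm
  val : ℕ → Set W

/-- Truth of propositional formulas. -/
def Frame.psat (M : Frame) : M.W → PropForm → Prop := fun w F =>
  match F with
  | .atom n => w ∈ M.val n
  | .fls => False
  | .imp A B => M.psat w A → M.psat w B

/-- Truth for the full language. -/
def Frame.sat (M : Frame) : M.W → JForm → Prop := fun w φ =>
  match φ with
  | .atom n => w ∈ M.val n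
  | .fls => False
  | .imp A B => M.sat w A → M.sat w B
  | .box i A => ∀ u, M.R i w u → M.sat u A
  | .just i t F => F ∈ M.star i t w

/-- Justification yields belief (for ground terms). -/
def Frame.JYB (M : Frame) : Prop :=
  ∀ i (t : Tm) w F, t.Ground → F ∈ M.star i t w → ∀ u, M.R i w u → M.psat u F

/-- Finiteness constraints on evidence functions. -/
def Frame.FinEv (M : Frame) : Prop :=
  (∀ i w, {t : Tm | t.Ground ∧ (M.star i t w).Nonempty}.Finite) ∧
  (∀ i (t : Tm) w, t.Ground → (M.star i t w).Finite)

/-- Multi-agent modular models. -/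
def Frame.Modular (M : Frame) : Prop := M.JYB ∧ M.FinEv

/-- Explanations: finite trees of propositional formulas. `node cs B` has
claim `B`; it is a hypothesis (leaf) if `cs = []` and a derived formula
otherwise. -/
inductive Expl : Type
  | node : List Expl → PropForm → Expl

def Expl.claim : Expl → PropForm
  | .node _ B => B

def Expl.children : Expl → List Expl
  | .node cs _ => cs

/-- Hypotheses (leaves) of an explanation. -/
def Expl.hyps : Expl → List PropForm
  | .node [] B => [B]
  | .node (c :: cs) _ => ((c :: cs).attach).flatMap (fun x => x.1.hyps)
decreasing_by
  have := List.sizeOf_lt_of_mem x.2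
  simp only [Expl.node.sizeOf_spec] at *
  omega

/-- Deduction steps of an explanation: pairs (premises, derived formula). -/
def Expl.steps : Expl → List (List PropForm × PropForm)
  | .node [] _ => []
  | .node (c :: cs) B =>
      ((c :: cs).map Expl.claim, B) :: ((c :: cs).attach).flatMap (fun x => x.1.steps)
decreasing_by
  have := List.sizeOf_lt_of_mem x.2
  simp only [Expl.node.sizeOf_spec] at *
  omega

/-- All subtrees of an explanation (including itself). -/
def Expl.subtrees : Expl → List Expl
  | .node cs B => .node cs B :: (cs.attach).flatMap (fun x => x.1.subtrees)
decreasing_by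
  have := List.sizeOf_lt_of_mem x.2
  simp only [Expl.node.sizeOf_spec] at *
  omega

/-- Set of derived formulas of an explanation. -/
def Expl.dset (E : Expl) : Set PropForm := {G | ∃ L, (L, G) ∈ E.steps}

/-- `DTerm M i w E t`: `t` is a derived term of `claim E` with respect to the
explanation `E`, constructed by agent `i` at world `w`.  For a hypothesis the
"derived term" is a ground justifying term if one exists, and the variable
`x_A` otherwise; for a derived formula it is `d·t₁⋯tₙ` if the agent has a
ground justification `d` of the deduction step, and the variable
`x_B^{Pr(E,B)}` otherwise. -/
inductive DTerm (M : Frame) (i : Fin 2) (w : M.W) : Expl → Tm → Prop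
  | hyp_just {A : PropForm} {t : Tm} :
      t.Ground → A ∈ M.star i t w → DTerm M i w (.node [] A) t
  | hyp_var {A : PropForm} :
      (¬ ∃ t : Tm, t.Ground ∧ A ∈ M.star i t w) →
      DTerm M i w (.node [] A) (.var A [])
  | step {cs : List Expl} {B : PropForm} {d : Tm} {ts : List Tm}
      (hne : cs ≠ []) (hd : d.Ground)
      (hj : bigImp (cs.map Expl.claim) B ∈ M.star i d w)
      (hlen : ts.length = cs.length)
      (hts : List.Forall₂ (DTerm M i w) cs ts) :
      DTerm M i w (.node cs B) (ts.foldl Tm.app d)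
  | step_var {cs : List Expl} {B : PropForm} (hne : cs ≠ [])
      (h : ¬ ∃ d : Tm, d.Ground ∧ bigImp (cs.map Expl.claim) B ∈ M.star i d w) :
      DTerm M i w (.node cs B) (.var B (cs.map Expl.claim))

/-- Agent 2 understands `E` at `w` iff its derived term of `claim E` w.r.t.
`E` is ground. -/
def Understands (M : Frame) (w : M.W) (E : Expl) : Prop :=
  ∃ t : Tm, DTerm M 1 w E t ∧ t.Ground

/-- The updated evidence function of agent 2 after learning from explanation
`E` at `w0`, where `Dts` records the derived term of each derived formula of
`E` and `r` is the derived term of `claim E`. -/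
noncomputable def learnStar (M : Frame) (w0 : M.W) (E : Expl)
    (Dts : List (PropForm × Tm)) (r : Tm) : Fin 2 → Tm → M.W → Set PropForm :=
  fun i t w =>
    if i = 1 ∧ w = w0 then
      M.star i t w ∪ {F | (F, t) ∈ Dts} ∪
        {G | ∃ s : Tm, G ∈ M.star i s w ∧
          (t = Tm.subst (E.claim, []) r s ∨ t = Tm.subst (E.claim, E.hyps) r s)}
    else M.star i t w

/-- The model `M|(2, w0, E)` after agent 2 learns from explanation `E`. -/
noncomputable def learnModel (M : Frame) (w0 : M.W) (E : Expl)
    (Dts : List (PropForm × Tm)) (r : Tm) : Frame :=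
  { M with star := learnStar M w0 E Dts r }

/-- `Dts` and `r` are genuine derived-term data for `E`: every entry of `Dts`
is a derived term of a derived formula of `E`, every derived formula of `E`
has its derived term recorded in `Dts`, `r` is a derived term of `claim E`
w.r.t. `E`, and (when `E` is not a single hypothesis) `r` is the recorded
derived term of `claim E`. -/
def GoodDerived (M : Frame) (w : M.W) (E : Expl)
    (Dts : List (PropForm × Tm)) (r : Tm) : Prop :=
  DTerm M 1 w E r ∧
  (∀ p ∈ Dts, ∃ sub ∈ E.subtrees, sub.children ≠ [] ∧ sub.claim = p.1 ∧
      DTerm M 1 w sub p.2) ∧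
  (∀ sub ∈ E.subtrees, sub.children ≠ [] →
      ∃ t : Tm, (sub.claim, t) ∈ Dts ∧ DTerm M 1 w sub t) ∧
  (E.children ≠ [] → (E.claim, r) ∈ Dts)

/-- Restriction of a model to a set of worlds (update by a set of worlds). -/
def Frame.restrict (M : Frame) (X : Set M.W) (hne : X.Nonempty) : Frame where
  W := X
  ne := hne.to_subtype
  R i u v := M.R i u.1 v.1
  refl i u := M.refl i u.1
  trans i _ _ _ h1 h2 := M.trans i h1 h2
  star i t u := M.star i t u.1
  val n := {u | u.1 ∈ M.val n}

/-- The feedback value of agent 2 on a node of an explanation: a hypothesis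
gets value 1 iff agent 2 can justify it by a ground term; a derived formula
gets value 1 iff agent 2 understands the subexplanation rooted at it. -/
def FVal (M : Frame) (w : M.W) : Expl → Prop
  | .node [] A => ∃ t : Tm, t.Ground ∧ A ∈ M.star 1 t w
  | .node (c :: cs) B => Understands M w (.node (c :: cs) B)

/-- The truth set by which agent 1 updates upon receiving agent 2's feedback
on the node `sub` of an explanation. -/
noncomputable def Uset (M : Frame) (w : M.W) : Expl → Set M.W
  | .node [] A =>
      if FVal M w (.node [] A) then {u | ∃ t : Tm, t.Ground ∧ A ∈ M.star 1 t u}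
      else {u | ¬ ∃ t : Tm, t.Ground ∧ A ∈ M.star 1 t u}
  | .node (c :: cs) B =>
      if FVal M w (.node (c :: cs) B) then
        {u | ∃ t : Tm, t.Ground ∧ bigImp ((c :: cs).map Expl.claim) B ∈ M.star 1 t u}
      else if ∀ c' ∈ c :: cs, FVal M w c' then
        {u | ¬ ∃ t : Tm, t.Ground ∧ bigImp ((c :: cs).map Expl.claim) B ∈ M.star 1 t u}
      else Set.univ

/-- The combined truth set of the series of updates by agent 2's feedback on
all nodes of explanation `E`. -/
noncomputable def FeedbackSet (M : Frame) (w : M.W) (E : Expl) : Set M.W :=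
  {u | ∀ sub ∈ E.subtrees, u ∈ Uset M w sub}

/-- Agent 1 is not sure whether agent 2 can justify `F`:  ¬□₁△₂F. -/
def NotSure (M : Frame) (w : M.W) (F : PropForm) : Prop :=
  ¬ ∀ u, M.R 0 w u → ∃ t : Tm, t.Ground ∧ F ∈ M.star 1 t u

/-- `N(E)`: the hypotheses and deduction steps of `E` that agent 1 is not
sure agent 2 can justify. -/
def Nset (M : Frame) (w : M.W) (E : Expl) : Set PropForm :=
  {F | (F ∈ E.hyps ∧ NotSure M w F) ∨
       ∃ p ∈ E.steps, p.2 = F ∧ NotSure M w (bigImp p.1 p.2)}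

/-- The preference relation over explanations: `Pref M w E E'` means
`E ≾ E'` (`E'` is at least as preferred as `E`). -/
def Pref (M : Frame) (w : M.W) (E E' : Expl) : Prop :=
  (Nset M w E).ncard > (Nset M w E').ncard ∨
  ((Nset M w E).ncard = (Nset M w E').ncard ∧ E.dset.ncard ≥ E'.dset.ncard)

/-- `E` is available for agent 1 (index 0) to agent 2 (index 1) at `w`. -/
def Available (M : Frame) (w : M.W) (E : Expl) : Prop :=
  (∀ A ∈ E.hyps, ∃ t : Tm, t.Ground ∧ A ∈ M.star 0 t w) ∧
  (∀ sub ∈ E.subtrees, sub.children ≠ [] →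
      ∃ s : Tm, s.Ground ∧ DTerm M 0 w sub s ∧ sub.claim ∈ M.star 0 s w) ∧
  (∀ A ∈ E.hyps, ¬ ∀ u, M.R 0 w u → ¬ ∃ t : Tm, t.Ground ∧ A ∈ M.star 1 t u) ∧
  (∀ p ∈ E.steps,
      ¬ ∀ u, M.R 0 w u → ¬ ∃ t : Tm, t.Ground ∧ bigImp p.1 p.2 ∈ M.star 1 t u)

/-- `λ(A, F)`: available explanations proving `F` from hypotheses `A`. -/
def lam (M : Frame) (w : M.W) (A : List PropForm) (F : PropForm) : Set Expl :=
  {E | E.claim = F ∧ (A ≠ [] → ∀ x, x ∈ E.hyps ↔ x ∈ A) ∧ Available M w E}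

/-- `why(𝓕(E))`: the nodes of `E` with feedback value 0 all of whose
premises have feedback value 1. -/
def whySet (M : Frame) (w : M.W) (E : Expl) : Set Expl :=
  {sub | sub ∈ E.subtrees ∧ ¬ FVal M w sub ∧ ∀ c ∈ sub.children, FVal M w c}

/-- The candidate explanations after feedback on `prev`: available
explanations for the initial claim `F` together with available explanations
for the formulas agent 2 asked about. -/
def Cands (M : Frame) (w : M.W) (F : PropForm) (prev : Expl) : Set Expl :=
  lam M w [] F ∪
    {E' | ∃ sub ∈ whySet M w prev,
        E' ∈ lam M w (sub.children.map Expl.claim) sub.claim}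

/-- Most preferred explanations in a set of candidates. -/
def MostPref (M : Frame) (w : M.W) (X : Set Expl) (E : Expl) : Prop :=
  E ∈ X ∧ ∀ E' ∈ X, Pref M w E' E

/-- A state of the conversation: a model together with the actual world. -/
abbrev ConvState := Σ N : Frame, N.W

/-- Agent 2 learns from explanation `E` (an update of the model). -/
def ExplStep (p q : ConvState) (E : Expl) : Prop :=
  ∃ (Dts : List (PropForm × Tm)) (r : Tm),
    GoodDerived p.1 p.2 E Dts r ∧ q = ⟨learnModel p.1 p.2 E Dts r, p.2⟩

/-- Agent 1 learns from agent 2's (truthful) feedback on `E`. -/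
def FbStep (p q : ConvState) (E : Expl) : Prop :=
  ∃ hw : p.2 ∈ FeedbackSet p.1 p.2 E,
    q = ⟨p.1.restrict (FeedbackSet p.1 p.2 E) ⟨p.2, hw⟩, ⟨p.2, hw⟩⟩

/-- One round of the conversation: an explanation followed by feedback. -/
def RoundStep (p q : ConvState) (E : Expl) : Prop :=
  ∃ mid : ConvState, ExplStep p mid E ∧ FbStep mid q E

lemma psat_toJ (M : Frame) (w : M.W) (F : PropForm) : M.psat w F ↔ M.sat w F.toJ := by
  induction F with
  | atom n => rfl
  | fls => rfl
  | imp A B ihA ihB =>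
    simp only [Frame.psat, PropForm.toJ, Frame.sat, ihA, ihB]

/-- In any multi-agent modular model, for every agent `i`, every
ground term `t` and every propositional formula `F`, the formula
`[[t]]ᵢF → F` is valid (factivity of ground justifications). -/
theorem ground_justification_factive (M : Frame) (hM : M.Modular)
    (i : Fin 2) (t : Tm) (ht : t.Ground) (F : PropForm) :
    ∀ w : M.W, M.sat w (.imp (.just i t F) F.toJ) := by
  intro w h
  exact (psat_toJ M w F).mp (hM.1 i t w F ht h w (M.refl i w))
end

section
/- There exists a multi-agent modular model M, a world w, terms s, t, and formulas F, G such that M,w ⊨ [[s]]_i(F → G) and M,w ⊨ [[t]]_i F but M,w ⊭ [[s·t]]_i G. That is, the application axiom [[s]]_i(F→G) → ([[t]]_i F → [[s·t]]_i G) is not valid in the class of multi-agent modular models. -/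
open Classical

/-- The application axiom
`[[s]]ᵢ(F → G) → ([[t]]ᵢF → [[s·t]]ᵢG)` is not valid in the class of
multi-agent modular models: there are a modular model, a world, an agent,
terms and formulas witnessing its failure. -/
theorem application_not_valid :
    ∃ M : Frame, M.Modular ∧
      ∃ (w : M.W) (i : Fin 2) (s t : Tm) (F G : PropForm),
        M.sat w (.just i s (F.imp G)) ∧ M.sat w (.just i t F) ∧
        ¬ M.sat w (.just i (s.app t) G) := by
  classical
  refine ⟨{ W := Unit, ne := ⟨()⟩, R := fun _ _ _ => True,
            refl := fun _ _ => trivial, trans := fun _ _ _ _ _ _ => trivial,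
            star := fun _ t _ =>
              if t = Tm.const 0 then {PropForm.imp (.atom 0) (.atom 0)}
              else if t = Tm.const 1 then {PropForm.atom 0} else ∅,
            val := fun _ => Set.univ }, ?_, (), 0, Tm.const 0, Tm.const 1,
          .atom 0, .atom 0, ?_, ?_, ?_⟩
  · constructor
    · intro i t w F _ hF u _
      simp only at hF
      split_ifs at hF with h1 h2
      · simp only [Set.mem_singleton_iff] at hF
        subst hF
        intro _; trivial
      · simp only [Set.mem_singleton_iff] at hF
        subst hF; trivial
      · exact absurd hF (Set.notMem_empty F)
    · constructor
      · intro i w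
        apply Set.Finite.subset (Set.toFinite {Tm.const 0, Tm.const 1})
        rintro t ⟨_, F, hF⟩
        simp only at hF
        split_ifs at hF with h1 h2
        · exact Or.inl h1
        · exact Or.inr h2
        · exact absurd hF (Set.notMem_empty F)
      · intro i t w _
        simp only
        split_ifs <;> simp
  · simp [Frame.sat]
  · simp [Frame.sat]
  · simp [Frame.sat]
end

section
/- Agent 2 understands an explanation E at world w (i.e., agent 2's derived term of claim(E) with respect to E is ground) if and only if (a) for every hypothesis F ∈ H(E) there exists a ground term t with M,w ⊨ [[t]]_2 F, and (b) for every derived formula G ∈ D(E) there exists a ground term s with M,w ⊨ [[s]]_2 (A_1 → (··· → (A_n → G)···)), where A_1,…,A_n = Pr(E,G) are the premises of G in E. -/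
open Classical

theorem List.Forall₂.exists_mem_right {α β : Type*} {R : α → β → Prop} :
    ∀ {l : List α} {l' : List β}, List.Forall₂ R l l' → ∀ x ∈ l, ∃ y ∈ l', R x y
  | _, _, .nil => by simp
  | _, _, .cons hxy h => by
    rintro x (_ | ⟨_, hx⟩)
    · exact ⟨_, List.mem_cons_self, hxy⟩
    · obtain ⟨y, hy, hR⟩ := h.exists_mem_right x hx
      exact ⟨y, List.mem_cons_of_mem _ hy, hR⟩

theorem List.exists_forall₂_of_forall_mem {α β : Type*} {R : α → β → Prop} {P : β → Prop} :
    ∀ {l : List α}, (∀ x ∈ l, ∃ y, R x y ∧ P y) →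
      ∃ l', List.Forall₂ R l l' ∧ ∀ y ∈ l', P y
  | [], _ => ⟨[], .nil, by simp⟩
  | x :: l, h => by
    obtain ⟨y, hR, hP⟩ := h x List.mem_cons_self
    obtain ⟨l', hl', hPl'⟩ :=
      List.exists_forall₂_of_forall_mem fun x' hx' => h x' (List.mem_cons_of_mem _ hx')
    exact ⟨y :: l', .cons hR hl', List.forall_mem_cons.2 ⟨hP, hPl'⟩⟩

theorem Tm.ground_foldl_app (d : Tm) (ts : List Tm) :
    (ts.foldl Tm.app d).Ground ↔ d.Ground ∧ ∀ t ∈ ts, t.Ground := by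
  induction ts generalizing d with
  | nil => simp
  | cons t ts ih => simp only [List.foldl_cons, ih, Tm.Ground, List.forall_mem_cons, and_assoc]

namespace Expl

theorem hyps_leaf (A : PropForm) : (node [] A).hyps = [A] := by
  rw [hyps]

theorem steps_leaf (A : PropForm) : (node [] A).steps = [] := by
  rw [steps]

theorem mem_hyps_node_cons {A B : PropForm} {c : Expl} {cs : List Expl} :
    A ∈ (node (c :: cs) B).hyps ↔ ∃ c' ∈ c :: cs, A ∈ c'.hyps := by
  rw [hyps]
  simp only [List.mem_flatMap, List.mem_attach, true_and, Subtype.exists, exists_prop]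

theorem mem_steps_node_cons {p : List PropForm × PropForm} {B : PropForm} {c : Expl}
    {cs : List Expl} :
    p ∈ (node (c :: cs) B).steps ↔
      p = ((c :: cs).map claim, B) ∨ ∃ c' ∈ c :: cs, p ∈ c'.steps := by
  rw [steps, List.mem_cons]
  simp only [List.mem_flatMap, List.mem_attach, true_and, Subtype.exists, exists_prop]

end Expl

section Justifiable

variable (M : Frame) (i : Fin 2) (w : M.W)

/-- The paper's `△ᵢF`: agent `i` has a ground justification of `F` at `w`. -/
def Frame.Justifiable (F : PropForm) : Prop :=
  ∃ t : Tm, t.Ground ∧ F ∈ M.star i t w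

def Frame.JustifiesExpl (E : Expl) : Prop :=
  (∀ A ∈ E.hyps, M.Justifiable i w A) ∧
    ∀ p ∈ E.steps, M.Justifiable i w (bigImp p.1 p.2)

theorem Frame.justifiesExpl_leaf (A : PropForm) :
    M.JustifiesExpl i w (.node [] A) ↔ M.Justifiable i w A := by
  simp [Frame.JustifiesExpl, Expl.hyps_leaf, Expl.steps_leaf]

theorem Frame.justifiesExpl_node_cons (B : PropForm) (c : Expl) (cs : List Expl) :
    M.JustifiesExpl i w (.node (c :: cs) B) ↔
      M.Justifiable i w (bigImp ((c :: cs).map Expl.claim) B) ∧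
        ∀ c' ∈ c :: cs, M.JustifiesExpl i w c' := by
  simp only [Frame.JustifiesExpl, Expl.mem_hyps_node_cons, Expl.mem_steps_node_cons]
  constructor
  · rintro ⟨hhyps, hsteps⟩
    exact ⟨hsteps _ (.inl rfl), fun c' hc' =>
      ⟨fun A hA => hhyps A ⟨c', hc', hA⟩, fun p hp => hsteps p (.inr ⟨c', hc', hp⟩)⟩⟩
  · rintro ⟨hstep, hchildren⟩
    refine ⟨fun A ⟨c', hc', hA⟩ => (hchildren c' hc').1 A hA, ?_⟩
    rintro p (rfl | ⟨c', hc', hp⟩)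
    exacts [hstep, (hchildren c' hc').2 p hp]

theorem exists_ground_dterm_leaf_iff (A : PropForm) :
    (∃ t, DTerm M i w (.node [] A) t ∧ t.Ground) ↔ M.Justifiable i w A := by
  constructor
  · rintro ⟨t, hD, hg⟩
    cases hD with
    | hyp_just htg ht => exact ⟨t, htg, ht⟩
    | hyp_var => exact hg.elim
    | step hne => exact (hne rfl).elim
    | step_var hne => exact (hne rfl).elim
  · rintro ⟨t, htg, ht⟩
    exact ⟨t, .hyp_just htg ht, htg⟩

theorem exists_ground_dterm_node_iff {cs : List Expl} (hne : cs ≠ []) (B : PropForm) :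
    (∃ t, DTerm M i w (.node cs B) t ∧ t.Ground) ↔
      M.Justifiable i w (bigImp (cs.map Expl.claim) B) ∧
        ∀ c ∈ cs, ∃ t, DTerm M i w c t ∧ t.Ground := by
  constructor
  · rintro ⟨t, hD, hg⟩
    cases hD with
    | hyp_just => exact (hne rfl).elim
    | hyp_var => exact (hne rfl).elim
    | @step _ _ d ts _ hd hj _ hts =>
      rw [Tm.ground_foldl_app] at hg
      refine ⟨⟨d, hd, hj⟩, fun c hc => ?_⟩
      obtain ⟨t, ht, hDc⟩ := hts.exists_mem_right c hc
      exact ⟨t, hDc, hg.2 t ht⟩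
    | step_var => exact hg.elim
  · rintro ⟨⟨d, hd, hj⟩, hchildren⟩
    obtain ⟨ts, hts, htsg⟩ := List.exists_forall₂_of_forall_mem hchildren
    exact ⟨_, .step hne hd hj hts.length_eq.symm hts, (Tm.ground_foldl_app d ts).2 ⟨hd, htsg⟩⟩

theorem exists_ground_dterm_iff :
    ∀ E : Expl, (∃ t, DTerm M i w E t ∧ t.Ground) ↔ M.JustifiesExpl i w E
  | .node [] A => by
    rw [exists_ground_dterm_leaf_iff, Frame.justifiesExpl_leaf]
  | .node (c :: cs) B => by
    rw [exists_ground_dterm_node_iff M i w (List.cons_ne_nil c cs),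
      Frame.justifiesExpl_node_cons]
    exact and_congr_right fun _ => forall₂_congr fun c' _ => exists_ground_dterm_iff c'

end Justifiable

/-- Agent 2 understands `E` at `w` iff (a) every hypothesis of
`E` is justified by some ground term, and (b) for every deduction step
(premises `A₁,…,Aₙ`, conclusion `G`) of `E` some ground term justifies
`A₁ → (⋯ → (Aₙ → G)⋯)`. -/
theorem understands_iff (M : Frame) (w : M.W) (E : Expl) :
    Understands M w E ↔
      ((∀ A ∈ E.hyps, ∃ t : Tm, t.Ground ∧ A ∈ M.star 1 t w) ∧
       (∀ p ∈ E.steps, ∃ s : Tm, s.Ground ∧ bigImp p.1 p.2 ∈ M.star 1 s w)) :=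
  exists_ground_dterm_iff M 1 w E
end

section
/- If agent 2 already has, before the announcement of an explanation E, ground justifying terms for every hypothesis of E and for every deduction step of E such that all derived terms of E are already in agent 2's evidence sets (agent 2 is already aware of E), then the learning update is trivial: M|(2,w,E) has the same evidence function for agent 2 at w as M, hence M,w ⊨ φ ↔ [2:E]φ for all formulas φ of the language. -/
open Classical

theorem Tm.subst_eq_self_of_not_subterm {F : PropForm} {L : List PropForm} (r : Tm) {s : Tm}
    (h : ¬ (Tm.var F L).Subterm s) : Tm.subst (F, L) r s = s := by
  induction s with
  | const n => rfl
  | var F' L' =>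
    have hne : (F', L') ≠ (F, L) := by
      rintro ⟨⟩
      exact h rfl
    simp only [Tm.subst, if_neg hne]
  | app a b iha ihb =>
    simp only [Tm.Subterm, not_or] at h
    simp only [Tm.subst, iha h.2.1, ihb h.2.2]

theorem learnStar_eq_star {M : Frame} {w : M.W} {E : Expl} {Dts : List (PropForm × Tm)}
    {r : Tm} (haware : ∀ p ∈ Dts, p.1 ∈ M.star 1 p.2 w)
    (hnovar : ∀ (s : Tm) (G : PropForm), G ∈ M.star 1 s w →
      ¬ Tm.Subterm (.var E.claim []) s ∧ ¬ Tm.Subterm (.var E.claim E.hyps) s) :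
    learnStar M w E Dts r = M.star := by
  funext i t v
  unfold learnStar
  split_ifs with hiv
  · obtain ⟨rfl, rfl⟩ := hiv
    have hDts : {F | (F, t) ∈ Dts} ⊆ M.star 1 t v := fun F hF => haware (F, t) hF
    have hsubst : {G | ∃ s : Tm, G ∈ M.star 1 s v ∧
        (t = Tm.subst (E.claim, []) r s ∨ t = Tm.subst (E.claim, E.hyps) r s)} ⊆ M.star 1 t v := by
      rintro G ⟨s, hGs, ht | ht⟩
      · rwa [ht, Tm.subst_eq_self_of_not_subterm r (hnovar s G hGs).1]
      · rwa [ht, Tm.subst_eq_self_of_not_subterm r (hnovar s G hGs).2]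
    rw [Set.union_eq_left.mpr hDts, Set.union_eq_left.mpr hsubst]
  · rfl

theorem learn_trivial_of_aware_general (M : Frame) (w : M.W) (E : Expl)
    (Dts : List (PropForm × Tm)) (r : Tm)
    (haware : ∀ p ∈ Dts, p.1 ∈ M.star 1 p.2 w)
    (hnovar : ∀ (s : Tm) (G : PropForm), G ∈ M.star 1 s w →
      ¬ Tm.Subterm (.var E.claim []) s ∧ ¬ Tm.Subterm (.var E.claim E.hyps) s) :
    (∀ (t : Tm), (learnModel M w E Dts r).star 1 t w = M.star 1 t w) ∧
    (∀ φ : JForm, M.sat w φ ↔ (learnModel M w E Dts r).sat w φ) := by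
  unfold learnModel
  rw [learnStar_eq_star haware hnovar]
  -- `{ M with star := M.star }` is `M` by structure eta
  exact ⟨fun _ => rfl, fun _ => Iff.rfl⟩

/-- If agent 2 is already aware of `E` (every derived formula is
already in the evidence set of its derived term, and agent 2's evidence
function contains no occurrences of the variables `x_{claim E}` and
`x_{claim E}^{H(E)}`), then the learning update is trivial: agent 2's
evidence function at `w` is unchanged, hence `M,w ⊨ φ ↔ [2:E]φ` for every
formula `φ` of the language. -/
theorem learn_trivial_of_aware (M : Frame) (w : M.W) (E : Expl)
    (Dts : List (PropForm × Tm)) (r : Tm)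
    (h : GoodDerived M w E Dts r)
    (haware : ∀ p ∈ Dts, p.1 ∈ M.star 1 p.2 w)
    (hnovar : ∀ (s : Tm) (G : PropForm), G ∈ M.star 1 s w →
      ¬ Tm.Subterm (.var E.claim []) s ∧ ¬ Tm.Subterm (.var E.claim E.hyps) s) :
    (∀ (t : Tm), (learnModel M w E Dts r).star 1 t w = M.star 1 t w) ∧
    (∀ φ : JForm, M.sat w φ ↔ (learnModel M w E Dts r).sat w φ) :=
  learn_trivial_of_aware_general M w E Dts r haware hnovar
end

section
/- Given a multi-agent modular model M, a world w, an agent i, and a subset X ⊆ W containing w, the updated model M|(i,X) with W' = X, R_i' = R_i ∩ (X × X), R_j' = R_j restricted appropriately for j ≠ i, unchanged evidence functions, and π' = π ∩ X, is again a multi-agent modular model: R_i' is reflexive and transitive on X, and justification yields belief for ground terms still holds. -/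
open Classical

/-- The update of a modular model by a set of worlds `X`
containing the actual world is again a multi-agent modular model (the
restricted relations are reflexive and transitive, and JYB for ground terms
still holds). -/
theorem restrict_modular (M : Frame) (hM : M.Modular) (X : Set M.W)
    (w : M.W) (hw : w ∈ X) :
    (M.restrict X ⟨w, hw⟩).Modular := by
  have hpsat : ∀ F (u : X), (M.restrict X ⟨w, hw⟩).psat u F ↔ M.psat u.1 F := by
    intro F
    induction F with
    | atom n => intro u; rfl
    | fls => intro u; rfl
    | imp A B ihA ihB =>
      intro u
      constructor
      · intro h hA; exact (ihB u).mp (h ((ihA u).mpr hA))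
      · intro h hA; exact (ihB u).mpr (h ((ihA u).mp hA))
  refine ⟨?_, ?_, ?_⟩
  · intro i t u F hg hF v hR
    exact (hpsat F v).mpr (hM.1 i t u.1 F hg hF v.1 hR)
  · intro i u; exact hM.2.1 i u.1
  · intro i t u hg; exact hM.2.2 i t u.1 hg
end

section
/- Let M be a multi-agent modular model and suppose agent 1 receives agent 2's feedback F(E) on explanation E at world w. If F is a hypothesis of E and the feedback on F is 1 (agent 2 can justify F by a ground term), then in the updated model M|(1,F(E)), agent 1 believes that agent 2 can justify F: M,w ⊨ [1:F(E)] □_1 △_2 F. -/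
open Classical

theorem Uset_node_nil_of_FVal {M : Frame} {w : M.W} {A : PropForm}
    (h : FVal M w (.node [] A)) :
    Uset M w (.node [] A) = {u | ∃ t : Tm, t.Ground ∧ A ∈ M.star 1 t u} := by
  rw [Uset, if_pos h]

theorem FeedbackSet_subset_Uset {M : Frame} {w : M.W} {E sub : Expl}
    (hsub : sub ∈ E.subtrees) : FeedbackSet M w E ⊆ Uset M w sub :=
  fun _ hu => hu sub hsub

theorem feedback_pos_hyp_general (M : Frame) (w : M.W) (E : Expl)
    (F : PropForm) (hF : Expl.node [] F ∈ E.subtrees)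
    (h1 : FVal M w (Expl.node [] F))
    (hw : w ∈ FeedbackSet M w E) :
    ∀ u, (M.restrict (FeedbackSet M w E) ⟨w, hw⟩).R 0 ⟨w, hw⟩ u →
      ∃ t : Tm, t.Ground ∧
        F ∈ (M.restrict (FeedbackSet M w E) ⟨w, hw⟩).star 1 t u := by
  intro u _
  have hu : u.1 ∈ Uset M w (.node [] F) := FeedbackSet_subset_Uset hF u.2
  rwa [Uset_node_nil_of_FVal h1] at hu

/-- If `F` is a hypothesis of `E` with (truthful) feedback
value 1, then in the model updated by the feedback, agent 1 believes that
agent 2 can justify `F`: `M,w ⊨ [1:𝓕(E)] □₁△₂F`. -/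
theorem feedback_pos_hyp (M : Frame) (hM : M.Modular) (w : M.W) (E : Expl)
    (F : PropForm) (hF : Expl.node [] F ∈ E.subtrees)
    (h1 : FVal M w (Expl.node [] F))
    (hw : w ∈ FeedbackSet M w E) :
    ∀ u, (M.restrict (FeedbackSet M w E) ⟨w, hw⟩).R 0 ⟨w, hw⟩ u →
      ∃ t : Tm, t.Ground ∧
        F ∈ (M.restrict (FeedbackSet M w E) ⟨w, hw⟩).star 1 t u :=
  feedback_pos_hyp_general M w E F hF h1 hw
end

section
/- Under truthful feedback, if G is a derived formula of explanation E with premises Pr(E,G) = A_1,…,A_n and feedback value 1, then after agent 1 updates on the feedback, agent 1 believes agent 2 can justify the corresponding deduction step: M,w ⊨ [1:F(E)] □_1 △_2 (A_1 → (··· → (A_n → G)···)). -/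
open Classical

/-- If `G` is a derived formula of `E` with premises
`A₁,…,Aₙ` and (truthful) feedback value 1, then after updating on the
feedback, agent 1 believes that agent 2 can justify the deduction step:
`M,w ⊨ [1:𝓕(E)] □₁△₂(A₁ → (⋯ → (Aₙ → G)⋯))`. -/
theorem feedback_pos_derived (M : Frame) (hM : M.Modular) (w : M.W) (E : Expl)
    (cs : List Expl) (G : PropForm) (hne : cs ≠ [])
    (hG : Expl.node cs G ∈ E.subtrees)
    (h1 : FVal M w (Expl.node cs G))
    (hw : w ∈ FeedbackSet M w E) :
    ∀ u, (M.restrict (FeedbackSet M w E) ⟨w, hw⟩).R 0 ⟨w, hw⟩ u →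
      ∃ t : Tm, t.Ground ∧
        bigImp (cs.map Expl.claim) G ∈
          (M.restrict (FeedbackSet M w E) ⟨w, hw⟩).star 1 t u := by
  intro u _
  obtain ⟨c, cs', rfl⟩ := List.exists_cons_of_ne_nil hne
  have h := u.2 _ hG
  simp only [Uset, if_pos h1] at h
  exact h
end
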